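/- arXiv:1007.4823 — 3 statements merged into one kernel-verified Lean document; each statement's English description precedes it below -/
import Mathlib

section
/- Let m ≥ 0 be an integer and λ ∈ ℤ. For every formal power series Φ(z,X) ∈ 𝓕[[X]] and all α, α' ∈ GL⁺(2,ℝ), one has (Φ |^J_λ α) |^J_λ α' = Φ |^J_λ (αα'); that is, the operation |^J_λ defines a right action of GL⁺(2,ℝ) on 𝓕[[X]]. -/
noncomputable section

open Complex Polynomial

/-- The upper half plane `ℍ`, as a subset of `ℂ`. -/
def UHP : Set ℂ := {z : ℂ | 0 < z.im}

/-- `SL(2, ℝ)`. -/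
abbrev SL2R := Matrix.SpecialLinearGroup (Fin 2) ℝ

/-- `GL⁺(2, ℝ)`, the group of real 2×2 matrices of positive determinant. -/
abbrev GL2P := Matrix.GLPos (Fin 2) ℝ

/-- Topology on `SL(2,ℝ)` induced from the space of matrices (used to speak of
discrete subgroups of `SL(2,ℝ)`). -/
instance : TopologicalSpace SL2R :=
  TopologicalSpace.induced (fun g : SL2R => (g : Matrix (Fin 2) (Fin 2) ℝ)) inferInstance

/-- A function belongs to `𝓕` if it is holomorphic on the upper half plane. -/
def Hol (f : ℂ → ℂ) : Prop := DifferentiableOn ℂ f UHP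

/-- `𝔍(γ, z) = cz + d` for `γ ∈ SL(2, ℝ)`. -/
def jJ (γ : SL2R) (z : ℂ) : ℂ := (γ 1 0 : ℝ) * z + (γ 1 1 : ℝ)

/-- `𝔎(γ, z) = c/(cz + d)` for `γ ∈ SL(2, ℝ)`. -/
def kK (γ : SL2R) (z : ℂ) : ℂ := (γ 1 0 : ℝ) / jJ γ z

/-- `γ z = (az+b)/(cz+d)` for `γ ∈ SL(2, ℝ)`. -/
def mact (γ : SL2R) (z : ℂ) : ℂ := ((γ 0 0 : ℝ) * z + (γ 0 1 : ℝ)) / jJ γ z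

/-- The underlying real matrix of an element of `GL⁺(2, ℝ)`. -/
def gmat (α : GL2P) : Matrix (Fin 2) (Fin 2) ℝ :=
  ((α : Matrix.GeneralLinearGroup (Fin 2) ℝ) : Matrix (Fin 2) (Fin 2) ℝ)

/-- The determinant of an element of `GL⁺(2, ℝ)`. -/
def gdet (α : GL2P) : ℝ := (gmat α).det

/-- `𝔍(α, z) = cz + d` for `α ∈ GL⁺(2, ℝ)`. -/
def gJ (α : GL2P) (z : ℂ) : ℂ := (gmat α 1 0 : ℝ) * z + (gmat α 1 1 : ℝ)

/-- `𝔎(α, z) = c/(cz + d)` for `α ∈ GL⁺(2, ℝ)`. -/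
def gK (α : GL2P) (z : ℂ) : ℂ := (gmat α 1 0 : ℝ) / gJ α z

/-- `α z = (az+b)/(cz+d)` for `α ∈ GL⁺(2, ℝ)`. -/
def gact (α : GL2P) (z : ℂ) : ℂ := ((gmat α 0 0 : ℝ) * z + (gmat α 0 1 : ℝ)) / gJ α z

/-- `(det α)^(μ/2)` for `α ∈ GL⁺(2, ℝ)` and `μ ∈ ℤ`. -/
def detpow (α : GL2P) (μ : ℤ) : ℂ := ((gdet α ^ ((μ : ℝ) / 2) : ℝ) : ℂ)

/-- The weight-`ξ` action `F ∥_ξ γ` of `SL(2,ℝ)` on polynomials over `𝓕`: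
`(F ∥_ξ γ)(z, X) = 𝔍(γ,z)^(-ξ) F(γz, 𝔍(γ,z)^2 (X - 𝔎(γ,z)))`. -/
def polyAct (ξ : ℤ) (F : ℂ → Polynomial ℂ) (γ : SL2R) : ℂ → Polynomial ℂ := fun z =>
  Polynomial.C (jJ γ z ^ (-ξ)) *
    (F (mact γ z)).comp (Polynomial.C (jJ γ z ^ 2) * (Polynomial.X - Polynomial.C (kK γ z)))

/-- The weight-`ξ` action `F ∥_ξ α` of `GL⁺(2,ℝ)` on polynomials over `𝓕`:
`(F ∥_ξ α)(z, X) = (det α)^(ξ/2) 𝔍(α,z)^(-ξ) F(αz, (det α)⁻¹ 𝔍(α,z)^2 (X - 𝔎(α,z)))`. -/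
def polyActG (ξ : ℤ) (F : ℂ → Polynomial ℂ) (α : GL2P) : ℂ → Polynomial ℂ := fun z =>
  Polynomial.C (detpow α ξ * gJ α z ^ (-ξ)) *
    (F (gact α z)).comp
      (Polynomial.C ((gdet α : ℂ)⁻¹ * gJ α z ^ 2) * (Polynomial.X - Polynomial.C (gK α z)))

/-- The weight-`l` action `Φ |^J_l γ` of `SL(2,ℝ)` on formal power series over `𝓕`:
`(Φ |^J_l γ)(z, X) = 𝔍(γ,z)^(-l) e^(-𝔎(γ,z) X) Φ(γz, 𝔍(γ,z)^(-2) X)`. -/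
def psAct (l : ℤ) (Φ : ℂ → PowerSeries ℂ) (γ : SL2R) : ℂ → PowerSeries ℂ := fun z =>
  PowerSeries.C (jJ γ z ^ (-l)) *
    (PowerSeries.mk fun n => (-(kK γ z)) ^ n / (n.factorial : ℂ)) *
    PowerSeries.rescale (jJ γ z ^ (-2 : ℤ)) (Φ (mact γ z))

/-- The weight-`l` action `Φ |^J_l α` of `GL⁺(2,ℝ)` on formal power series over `𝓕`:
`(Φ |^J_l α)(z, X) = (det α)^(l/2) 𝔍(α,z)^(-l) e^(-𝔎(α,z) X) Φ(αz, (det α) 𝔍(α,z)^(-2) X)`. -/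
def psActG (l : ℤ) (Φ : ℂ → PowerSeries ℂ) (α : GL2P) : ℂ → PowerSeries ℂ := fun z =>
  PowerSeries.C (detpow α l * gJ α z ^ (-l)) *
    (PowerSeries.mk fun n => (-(gK α z)) ^ n / (n.factorial : ℂ)) *
    PowerSeries.rescale ((gdet α : ℂ) * gJ α z ^ (-2 : ℤ)) (Φ (gact α z))

/-- The map `Π^δ_m`: for `Φ(z,X) = Σ_k φ_k(z) X^(k+δ)`,
`(Π^δ_m Φ)(z, X) = Σ_{r=0}^m (1/r!) φ_(m-r)(z) X^r`. -/
def PiDM (δ m : ℕ) (Φ : ℂ → PowerSeries ℂ) : ℂ → Polynomial ℂ := fun z =>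
  ∑ r ∈ Finset.range (m + 1),
    Polynomial.C ((PowerSeries.coeff (m - r + δ) (Φ z)) / (r.factorial : ℂ)) *
      Polynomial.X ^ r

/-- Membership in `𝓕_m[X]`: degree at most `m` and holomorphic coefficients. -/
def InFmX (m : ℕ) (F : ℂ → Polynomial ℂ) : Prop :=
  (∀ z : ℂ, (F z).degree ≤ (m : WithBot ℕ)) ∧ ∀ r : ℕ, Hol fun z => (F z).coeff r

/-- Membership in `𝓕[[X]]_δ = X^δ 𝓕[[X]]` with holomorphic coefficients. -/
def InFXd (δ : ℕ) (Φ : ℂ → PowerSeries ℂ) : Prop :=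
  (∀ z : ℂ, ∀ k < δ, PowerSeries.coeff k (Φ z) = 0) ∧
    ∀ k : ℕ, Hol fun z => PowerSeries.coeff k (Φ z)

/-- `QP^m_ξ(Γ)`: quasimodular polynomials of weight `ξ` and degree at most `m` for `Γ`. -/
def IsQP (Γ : Subgroup SL2R) (ξ : ℤ) (m : ℕ) (F : ℂ → Polynomial ℂ) : Prop :=
  InFmX m F ∧ ∀ γ ∈ Γ, ∀ z ∈ UHP, polyAct ξ F γ z = F z

/-- `J_l(Γ)_δ`: Jacobi-like forms of weight `l` for `Γ` lying in `𝓕[[X]]_δ`. -/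
def IsJF (Γ : Subgroup SL2R) (l : ℤ) (δ : ℕ) (Φ : ℂ → PowerSeries ℂ) : Prop :=
  InFXd δ Φ ∧ ∀ γ ∈ Γ, ∀ z ∈ UHP, psAct l Φ γ z = Φ z

/-- `M_μ(Γ)`: modular forms of weight `μ` for `Γ` (cusp conditions suppressed). -/
def IsModular (Γ : Subgroup SL2R) (μ : ℤ) (f : ℂ → ℂ) : Prop :=
  Hol f ∧ ∀ γ ∈ Γ, ∀ z ∈ UHP, jJ γ z ^ (-μ) * f (mact γ z) = f z

/-- `QM^m_ξ(Γ)`: quasimodular forms of weight `ξ` and depth at most `m` for `Γ`. -/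
def IsQM (Γ : Subgroup SL2R) (ξ : ℤ) (m : ℕ) (f : ℂ → ℂ) : Prop :=
  Hol f ∧ ∃ g : ℕ → ℂ → ℂ, (∀ r, Hol (g r)) ∧
    ∀ γ ∈ Γ, ∀ z ∈ UHP,
      jJ γ z ^ (-ξ) * f (mact γ z) = ∑ r ∈ Finset.range (m + 1), g r z * kK γ z ^ r

/-- The factorial `t!` of an integer `t` (equal to `(t.toNat)!`; intended for `t ≥ 0`). -/
def zfact (t : ℤ) : ℂ := (t.toNat.factorial : ℂ)

/-!
At a point `z`, `Φ |^J_λ α` has the shape `a · e^(kX) · Φ(αz, rX)` with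
`a = (det α)^(λ/2) 𝔍(α,z)^(-λ)`, `k = -𝔎(α,z)` and `r = (det α) 𝔍(α,z)^(-2)`. Two such operators
compose to one of the same shape with data `(a a', k + k' r, r' r)`, because
`e^(kX) e^(k'rX) = e^((k + k'r)X)`. So the action property reduces to the cocycle relations
`𝔍(αα', z) = 𝔍(α, α'z) 𝔍(α', z)` and
`𝔎(αα', z) = 𝔎(α', z) + (det α') 𝔍(α', z)^(-2) 𝔎(α, α'z)`,
together with multiplicativity of the determinant.
-/

open PowerSeries UpperHalfPlane

namespace PowerSeries

variable {R : Type*} [CommRing R]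

theorem rescale_C (a c : R) : rescale a (C c) = C c := by
  ext n
  rcases n with _ | n <;> simp [coeff_rescale, coeff_C]

theorem mk_pow_div_factorial_eq_rescale_exp {K : Type*} [Field K] [CharZero K] (x : K) :
    (mk fun n => x ^ n / (n.factorial : K)) = rescale x (exp K) := by
  ext n
  simp [coeff_rescale, coeff_exp, div_eq_mul_inv]

def twist [Algebra ℚ R] (a k r : R) (f : R⟦X⟧) : R⟦X⟧ :=
  C a * rescale k (exp R) * rescale r f

theorem twist_twist [Algebra ℚ R] (a k r a' k' r' : R) (f : R⟦X⟧) :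
    twist a k r (twist a' k' r' f) = twist (a * a') (k + k' * r) (r' * r) f := by
  simp only [twist, map_mul, rescale_C, rescale_rescale, ← exp_mul_exp_eq_exp_add]
  ring

end PowerSeries

section Cocycle

variable (α α' : GL2P) {z : ℂ}

theorem gdet_pos : 0 < gdet α := by
  simpa [gdet, gmat] using (Matrix.mem_glpos _).1 α.prop

theorem gdet_mul : gdet (α * α') = gdet α * gdet α' :=
  Matrix.det_mul _ _

theorem detpow_mul (l : ℤ) : detpow (α * α') l = detpow α l * detpow α' l := by
  rw [detpow, detpow, detpow, gdet_mul, Real.mul_rpow (gdet_pos α).le (gdet_pos α').le]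
  push_cast
  rfl

theorem gmat_mul : gmat (α * α') = gmat α * gmat α' := rfl

theorem gJ_ne_zero (hz : 0 < z.im) : gJ α z ≠ 0 :=
  denom_ne_zero_of_im α hz.ne'

theorem gact_coe (w : ℍ) : gact α w = ↑((α : GL (Fin 2) ℝ) • w) :=
  (coe_smul_of_det_pos (gdet_pos α) w).symm

theorem gact_mul (hz : 0 < z.im) : gact (α * α') z = gact α (gact α' z) := by
  let w : ℍ := ⟨z, hz⟩
  calc gact (α * α') z = ↑((α : GL (Fin 2) ℝ) • (α' : GL (Fin 2) ℝ) • w) := by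
        rw [← mul_smul]; exact gact_coe (α * α') w
    _ = gact α (gact α' z) := by rw [← gact_coe α, ← gact_coe α' w]

theorem gJ_mul (hz : 0 < z.im) : gJ (α * α') z = gJ α (gact α' z) * gJ α' z :=
  denom_cocycle α α' hz.ne'

theorem gK_mul (hz : 0 < z.im) :
    gK (α * α') z = gK α' z + (gdet α' : ℂ) * gJ α' z ^ (-2 : ℤ) * gK α (gact α' z) := by
  have hJ' := gJ_ne_zero α' hz
  have hJ : gJ α (gact α' z) ≠ 0 := left_ne_zero_of_mul (gJ_mul α α' hz ▸ gJ_ne_zero _ hz)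
  have hA : gJ α (gact α' z) * gJ α' z =
      gmat α 1 0 * (gmat α' 0 0 * z + gmat α' 0 1) + gmat α 1 1 * gJ α' z := by
    rw [gJ, gact]; field_simp
  rw [gK, gK, gK, gJ_mul α α' hz, zpow_neg]
  generalize gJ α (gact α' z) = A at hA hJ ⊢
  simp only [gdet, Matrix.det_fin_two, gmat_mul, Matrix.mul_apply, Fin.sum_univ_two, gJ]
    at hA hJ' ⊢
  push_cast at hA hJ' ⊢
  field_simp
  linear_combination -(gmat α' 1 0 : ℂ) * hA

end Cocycle

theorem psActG_eq_twist (l : ℤ) (Φ : ℂ → PowerSeries ℂ) (α : GL2P) (z : ℂ) :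
    psActG l Φ α z =
      twist (detpow α l * gJ α z ^ (-l)) (-gK α z) (gdet α * gJ α z ^ (-2 : ℤ))
        (Φ (gact α z)) := by
  rw [psActG, mk_pow_div_factorial_eq_rescale_exp, twist]

theorem stmt0_general (l : ℤ) (Φ : ℂ → PowerSeries ℂ) (α α' : GL2P) :
    ∀ z ∈ UHP, psActG l (psActG l Φ α) α' z = psActG l Φ (α * α') z := by
  intro z hz
  rw [psActG_eq_twist, psActG_eq_twist, twist_twist, psActG_eq_twist, gact_mul α α' hz]
  congr 1
  · rw [detpow_mul, gJ_mul α α' hz, mul_zpow]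
    ring
  · rw [gK_mul α α' hz]
    ring
  · rw [gdet_mul, gJ_mul α α' hz, mul_zpow]
    push_cast
    ring

/-- The operation `|^J_λ` is a right action of `GL⁺(2,ℝ)` on `𝓕[[X]]`. -/
theorem stmt0 (l : ℤ) (Φ : ℂ → PowerSeries ℂ)
    (hΦ : ∀ k : ℕ, Hol fun z => PowerSeries.coeff k (Φ z)) (α α' : GL2P) :
    ∀ z ∈ UHP, psActG l (psActG l Φ α) α' z = psActG l Φ (α * α') z :=
  stmt0_general l Φ α α'
end
end

section
/- Let m, δ ≥ 0 be integers and λ ∈ ℤ. For every formal power series Φ(z,X) ∈ 𝓕[[X]]_δ and every γ ∈ SL(2,ℝ), one has Π^δ_m(Φ |^J_λ γ) = (Π^δ_m Φ) ‖_{λ+2m+2δ} γ. -/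
noncomputable section

open Complex Polynomial

/-! `Π^δ_m Φ` is the coefficient of `Y^(m+δ)` in `Φ(Y) e^(XY) ∈ 𝓕[X][[Y]]`; here `Φ ∈ X^δ 𝓕[[X]]`
ensures that no terms beyond `X^m` occur. Under `Φ ↦ Φ |^J_λ γ` the factor `e^(-𝔎Y)` merges with
`e^(XY)` into `e^((X-𝔎)Y)`, and the rescaling `Y ↦ 𝔍^(-2) Y` multiplies the coefficient of
`Y^(m+δ)` by `𝔍^(-2(m+δ))` while turning `X - 𝔎` into `𝔍^2 (X - 𝔎)`. Substituting a polynomial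
for `X` commutes with taking coefficients in `Y`, which gives the weight `λ + 2m + 2δ` action. -/

theorem jJ_ne_zero (γ : SL2R) {z : ℂ} (hz : z ∈ UHP) : jJ γ z ≠ 0 := by
  intro h
  have hdet : (γ 0 0 : ℝ) * γ 1 1 - γ 0 1 * γ 1 0 = 1 := by
    rw [← Matrix.det_fin_two]
    exact γ.2
  have hc : (γ 1 0 : ℝ) = 0 := by
    have him := congrArg Complex.im h
    simp only [jJ, add_im, mul_im, ofReal_re, ofReal_im, zero_mul, add_zero, zero_im] at him
    exact (mul_eq_zero.1 him).resolve_right (ne_of_gt hz)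
  have hd : (γ 1 1 : ℝ) = 0 := by
    simpa [jJ, hc] using congrArg Complex.re h
  simp [hc, hd] at hdet

theorem PowerSeries.X_pow_dvd_rescale {R : Type*} [CommSemiring R] {δ : ℕ} {ψ : PowerSeries R}
    (h : PowerSeries.X ^ δ ∣ ψ) (c : R) : PowerSeries.X ^ δ ∣ rescale c ψ :=
  X_pow_dvd_iff.2 fun k hk => by rw [coeff_rescale, X_pow_dvd_iff.1 h k hk, mul_zero]

open PowerSeries (rescale)

/-- The series `ψ(Y) e^(P Y)` over `K[X]`, where `Y` is the power series variable. -/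
def expTwist {K : Type*} [Field K] [CharZero K] (ψ : PowerSeries K) (P : K[X]) :
    PowerSeries K[X] :=
  PowerSeries.map C ψ * rescale P (PowerSeries.exp K[X])

section expTwist

variable {K : Type*} [Field K] [CharZero K]

theorem coeff_expTwist_X {δ : ℕ} {ψ : PowerSeries K} (h : PowerSeries.X ^ δ ∣ ψ) (m : ℕ) :
    PowerSeries.coeff (m + δ) (expTwist ψ X) =
      ∑ r ∈ Finset.range (m + 1),
        C (PowerSeries.coeff (m - r + δ) ψ / (r.factorial : K)) * X ^ r := by
  rw [expTwist, PowerSeries.coeff_mul, ← Finset.Nat.sum_antidiagonal_swap]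
  simp only [Prod.fst_swap, Prod.snd_swap]
  rw [Finset.Nat.sum_antidiagonal_eq_sum_range_succ (fun r i =>
      PowerSeries.coeff i (PowerSeries.map C ψ) *
        PowerSeries.coeff r (rescale X (PowerSeries.exp K[X]))),
    ← Finset.sum_subset (Finset.range_subset_range.2 (by omega : m + 1 ≤ (m + δ).succ))]
  · refine Finset.sum_congr rfl fun r hr => ?_
    rw [Finset.mem_range] at hr
    rw [show m + δ - r = m - r + δ by omega]
    simp only [PowerSeries.coeff_map, PowerSeries.coeff_rescale, PowerSeries.coeff_exp,
      Polynomial.algebraMap_apply, div_eq_mul_inv, C_mul, one_mul, map_inv₀, map_natCast]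
    ring
  · intro r hr₁ hr
    rw [Finset.mem_range] at hr₁ hr
    rw [PowerSeries.coeff_map, PowerSeries.X_pow_dvd_iff.1 h _ (by omega), map_zero, zero_mul]

theorem coeff_expTwist_comp (ψ : PowerSeries K) (q : K[X]) (N : ℕ) :
    (PowerSeries.coeff N (expTwist ψ X)).comp q = PowerSeries.coeff N (expTwist ψ q) := by
  have hC : (compRingHom q).comp C = C := RingHom.ext fun _ => C_comp
  change compRingHom q _ = _
  rw [← PowerSeries.coeff_map, expTwist, map_mul, ← RingHom.comp_apply, ← PowerSeries.map_comp,
    hC, ← PowerSeries.rescale_map, PowerSeries.map_exp, coe_compRingHom_apply, X_comp, expTwist]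

theorem map_C_mk_pow_div_factorial (b : K) :
    PowerSeries.map C (PowerSeries.mk fun n => b ^ n / (n.factorial : K)) =
      rescale (C b) (PowerSeries.exp K[X]) := by
  ext n : 1
  simp [div_eq_mul_inv]

theorem expTwist_C_mul_exp_mul_rescale {a b c : K} (hc : c ≠ 0) (ψ : PowerSeries K) :
    expTwist (PowerSeries.C a * (PowerSeries.mk fun n => (-b) ^ n / (n.factorial : K)) *
        rescale c ψ) X =
      PowerSeries.C (C a) * rescale (C c) (expTwist ψ (C c⁻¹ * (X - C b))) := by
  have hq : C c⁻¹ * (X - C b) * C c = X + C (-b) := by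
    rw [mul_comm, ← mul_assoc, ← C_mul, mul_inv_cancel₀ hc, C_1, one_mul, C_neg, sub_eq_add_neg]
  rw [expTwist, expTwist, map_mul, map_mul, PowerSeries.map_C, map_C_mk_pow_div_factorial,
    ← PowerSeries.rescale_map, map_mul, PowerSeries.rescale_rescale, hq,
    ← PowerSeries.exp_mul_exp_eq_exp_add]
  ring

end expTwist

theorem stmt2 (m δ : ℕ) (l : ℤ) (Φ : ℂ → PowerSeries ℂ) (hΦ : InFXd δ Φ) (γ : SL2R) :
    ∀ z ∈ UHP,
      PiDM δ m (psAct l Φ γ) z = polyAct (l + 2 * (m : ℤ) + 2 * (δ : ℤ)) (PiDM δ m Φ) γ z := by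
  intro z hz
  have hJ : jJ γ z ≠ 0 := jJ_ne_zero γ hz
  have hΦw : PowerSeries.X ^ δ ∣ Φ (mact γ z) := PowerSeries.X_pow_dvd_iff.2 (hΦ.1 _)
  have hact : PowerSeries.X ^ δ ∣ psAct l Φ γ z :=
    dvd_mul_of_dvd_right (PowerSeries.X_pow_dvd_rescale hΦw _) _
  have hweight : jJ γ z ^ (-l) * (jJ γ z ^ (-2 : ℤ)) ^ (m + δ) =
      jJ γ z ^ (-(l + 2 * (m : ℤ) + 2 * (δ : ℤ))) := by
    rw [← zpow_natCast, ← zpow_mul, ← zpow_add₀ hJ]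
    push_cast
    ring_nf
  have hscale : (jJ γ z ^ (-2 : ℤ))⁻¹ = jJ γ z ^ 2 := by
    rw [zpow_neg, inv_inv, zpow_ofNat]
  rw [PiDM, ← coeff_expTwist_X hact, psAct, expTwist_C_mul_exp_mul_rescale (zpow_ne_zero _ hJ),
    PowerSeries.coeff_C_mul, PowerSeries.coeff_rescale, ← coeff_expTwist_comp,
    coeff_expTwist_X hΦw, polyAct, ← C_pow, ← mul_assoc, ← C_mul, hweight, hscale]
  rfl
end
end

section
/- Let F(z,X) = Σ_{r=0}^m f_r(z) X^r ∈ 𝓕_m[X], let ξ ∈ ℤ and γ ∈ SL(2,ℝ). Then for each 0 ≤ r ≤ m and all z ∈ ℍ, one has (𝔖_r(F ‖_ξ γ^{−1}) |_{ξ−2r} γ)(z) = Σ_{ℓ=r}^m C(ℓ,r) f_ℓ(z) 𝔎(γ,z)^{ℓ−r}, where C(ℓ,r) denotes the binomial coefficient. -/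
noncomputable section

open Complex Polynomial

/-! Since `𝔍(γ⁻¹, γz) = 𝔍(γ,z)⁻¹` and `𝔎(γ⁻¹, γz) = -c 𝔍(γ,z)`, the polynomial
`(F ‖_ξ γ⁻¹)(γz, X)` is `𝔍(γ,z)^ξ F(z, 𝔍(γ,z)⁻² (X + c 𝔍(γ,z)))`; expanding by the binomial
theorem, the powers of `𝔍(γ,z)` in the `X^r` coefficient collapse to `𝔎(γ,z)^(ℓ-r)`. -/

open Finset in
theorem Polynomial.coeff_comp_C_mul_X_sub_C {R : Type*} [CommRing R] {P : R[X]} {m : ℕ}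
    (hP : P.natDegree ≤ m) (u v : R) (r : ℕ) :
    (P.comp (C u * (X - C v))).coeff r =
      ∑ ℓ ∈ Icc r m, (ℓ.choose r : R) * P.coeff ℓ * u ^ ℓ * (-v) ^ (ℓ - r) := by
  rw [comp_eq_sum_left, sum_over_range' _ (fun _ => by simp) (m + 1) (by omega),
    finsetSum_coeff]
  have hIcc : Icc r m ⊆ range (m + 1) := fun ℓ hℓ => by
    rw [mem_Icc] at hℓ; exact mem_range.mpr (by omega)
  calc _ = ∑ ℓ ∈ range (m + 1), (ℓ.choose r : R) * P.coeff ℓ * u ^ ℓ * (-v) ^ (ℓ - r) :=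
        sum_congr rfl fun ℓ _ => by
          rw [mul_pow, ← C_pow, sub_eq_add_neg, ← C_neg, coeff_C_mul, coeff_C_mul,
            coeff_X_add_C_pow]
          ring
    _ = _ := by
      refine (sum_subset hIcc fun ℓ hℓm hℓ => ?_).symm
      have hlt : ℓ < r := by
        by_contra! h
        exact hℓ (mem_Icc.mpr ⟨h, Nat.lt_succ_iff.mp (mem_range.mp hℓm)⟩)
      simp [Nat.choose_eq_zero_of_lt hlt]

namespace SL2R

variable (γ : SL2R)

theorem det_coe : (γ 0 0 : ℂ) * γ 1 1 - γ 0 1 * γ 1 0 = 1 := by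
  have h : γ 0 0 * γ 1 1 - γ 0 1 * γ 1 0 = 1 := by rw [← Matrix.det_fin_two]; exact γ.2
  exact_mod_cast congrArg Complex.ofReal h

theorem jJ_ne_zero {z : ℂ} (hz : z ∈ UHP) : jJ γ z ≠ 0 := by
  intro h
  have hc : γ 1 0 = 0 := by
    have him : γ 1 0 * z.im = 0 := by simpa [jJ] using congrArg Complex.im h
    exact (mul_eq_zero.mp him).resolve_right hz.ne'
  have hd : γ 1 1 = 0 := by exact_mod_cast (by simpa [jJ, hc] using h : (γ 1 1 : ℂ) = 0)
  simpa [hc, hd] using det_coe γ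

theorem inv_apply : ((γ⁻¹ : SL2R) 0 0 = γ 1 1) ∧ ((γ⁻¹ : SL2R) 0 1 = -γ 0 1) ∧
    ((γ⁻¹ : SL2R) 1 0 = -γ 1 0) ∧ ((γ⁻¹ : SL2R) 1 1 = γ 0 0) := by
  simp [Matrix.SpecialLinearGroup.coe_inv, Matrix.adjugate_fin_two]

variable {γ} {z : ℂ} (hz : jJ γ z ≠ 0)
include hz

theorem jJ_inv_mact : jJ γ⁻¹ (mact γ z) = (jJ γ z)⁻¹ := by
  obtain ⟨-, -, h10, h11⟩ := inv_apply γ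
  simp only [jJ, mact, h10, h11, ofReal_neg] at hz ⊢
  field_simp
  linear_combination det_coe γ

theorem mact_inv_mact : mact γ⁻¹ (mact γ z) = z := by
  obtain ⟨h00, h01, -, -⟩ := inv_apply γ
  rw [mact, jJ_inv_mact hz, h00, h01]
  simp only [jJ, mact, ofReal_neg] at hz ⊢
  have hz' : z * (γ 1 0 : ℂ) + γ 1 1 ≠ 0 := by rwa [mul_comm]
  field_simp
  linear_combination z * det_coe γ

theorem kK_inv_mact : kK γ⁻¹ (mact γ z) = -(γ 1 0 : ℂ) * jJ γ z := by
  rw [kK, jJ_inv_mact hz, (inv_apply γ).2.2.1, ofReal_neg, div_inv_eq_mul]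

theorem polyAct_inv_mact (ξ : ℤ) (F : ℂ → Polynomial ℂ) :
    polyAct ξ F γ⁻¹ (mact γ z) =
      C (jJ γ z ^ ξ) * (F z).comp (C ((jJ γ z)⁻¹ ^ 2) * (X - C (-(γ 1 0 : ℂ) * jJ γ z))) := by
  rw [polyAct, mact_inv_mact hz, kK_inv_mact hz, jJ_inv_mact hz, inv_zpow', neg_neg]

end SL2R

theorem pow_mul_inv_pow_mul_pow_eq_div_pow {K : Type*} [Field K] {J : K} (hJ : J ≠ 0) (c : K)
    {r ℓ : ℕ} (h : r ≤ ℓ) :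
    J ^ (2 * r) * (J⁻¹ ^ 2) ^ ℓ * (c * J) ^ (ℓ - r) = (c / J) ^ (ℓ - r) := by
  obtain ⟨t, rfl⟩ := Nat.exists_eq_add_of_le h
  rw [Nat.add_sub_cancel_left, div_pow, mul_pow, ← pow_mul, inv_pow]
  field_simp
  ring

theorem stmt4 (m : ℕ) (ξ : ℤ) (F : ℂ → Polynomial ℂ) (hF : InFmX m F) (γ : SL2R) :
    ∀ r ≤ m, ∀ z ∈ UHP,
      jJ γ z ^ (-(ξ - 2 * (r : ℤ))) * (polyAct ξ F γ⁻¹ (mact γ z)).coeff r =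
        ∑ ℓ ∈ Finset.Icc r m, (ℓ.choose r : ℂ) * (F z).coeff ℓ * kK γ z ^ (ℓ - r) := by
  intro r _ z hz
  have hJ := SL2R.jJ_ne_zero γ hz
  have hweight : jJ γ z ^ (-(ξ - 2 * (r : ℤ))) * jJ γ z ^ ξ = jJ γ z ^ (2 * r) := by
    rw [← zpow_add₀ hJ, ← zpow_natCast]; push_cast; ring_nf
  rw [SL2R.polyAct_inv_mact hJ, coeff_C_mul,
    coeff_comp_C_mul_X_sub_C (natDegree_le_iff_degree_le.mpr (hF.1 z)), ← mul_assoc, hweight,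
    Finset.mul_sum]
  refine Finset.sum_congr rfl fun ℓ hℓ => ?_
  rw [kK, ← pow_mul_inv_pow_mul_pow_eq_div_pow hJ _ (Finset.mem_Icc.mp hℓ).1, neg_mul, neg_neg]
  ring
end
end
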